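/- arXiv:1906.09050 — 4 statements merged into one kernel-verified Lean document; each statement's English description precedes it below -/
import Mathlib

section
/- Let h ≥ 1 groups have Lomax distributions with parameters α₁ ≥ α₂ ≥ … ≥ α_h > 1, and let r₁, …, r_h ≥ 0 with r₁ + ⋯ + r_h = B satisfy (1+r_i)^{α_i} = (1+r_j)^{α_j} for all i, j. Then r_i ≤ B/(h - i + 1) for every i. -/
open Finset

theorem Real.le_of_rpow_eq_rpow_of_le {x y a b : ℝ} (hy : 1 ≤ y) (ha : 0 < a) (hba : b ≤ a)
    (h : x ^ a = y ^ b) : x ≤ y := by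
  by_contra! hyx
  have : y ^ a < x ^ a := Real.rpow_lt_rpow (by linarith) hyx ha
  linarith [Real.rpow_le_rpow_of_exponent_le hy hba]

theorem Finset.card_Ici_nsmul_le_sum {ι M : Type*} [Fintype ι] [Preorder ι]
    [LocallyFiniteOrderTop ι] [AddCommMonoid M] [PartialOrder M] [IsOrderedAddMonoid M]
    {f : ι → M} (hf : Monotone f) (hf0 : 0 ≤ f) (i : ι) :
    #(Ici i) • f i ≤ ∑ j, f j :=
  calc #(Ici i) • f i ≤ ∑ j ∈ Ici i, f j :=
        card_nsmul_le_sum _ _ _ fun _ hj => hf (mem_Ici.mp hj)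
    _ ≤ ∑ j, f j := sum_le_sum_of_subset_of_nonneg (subset_univ _) fun j _ _ => hf0 j

theorem Fin.sub_mul_le_sum_of_monotone {n : ℕ} {f : Fin n → ℝ} (hf : Monotone f) (hf0 : 0 ≤ f)
    (i : Fin n) : ((n : ℝ) - (i : ℕ)) * f i ≤ ∑ j, f j := by
  have := card_Ici_nsmul_le_sum hf hf0 i
  rwa [Fin.card_Ici, nsmul_eq_mul, Nat.cast_sub i.isLt.le] at this

/-- `i` is 0-indexed, so `B / (h - i)` is the paper's `B / (h - i + 1)`. -/
theorem lomax_maxutil_upper_general (h : ℕ) (α : Fin h → ℝ)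
    (hα1 : ∀ i, 1 < α i)
    (hmono : ∀ i j : Fin h, i ≤ j → α j ≤ α i)
    (r : Fin h → ℝ) (hr : ∀ i, 0 ≤ r i) (B : ℝ) (hsum : ∑ i, r i = B)
    (heq : ∀ i j : Fin h, (1 + r i) ^ (α i) = (1 + r j) ^ (α j)) :
    ∀ i : Fin h, r i ≤ B / ((h : ℝ) - (i : ℕ)) := by
  have hr_mono : Monotone r := fun i j hij => by
    have := Real.le_of_rpow_eq_rpow_of_le (by linarith [hr j]) (by linarith [hα1 i])
      (hmono i j hij) (heq i j)
    linarith
  intro i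
  have hpos : (0 : ℝ) < h - (i : ℕ) := sub_pos.mpr (by exact_mod_cast i.isLt)
  rw [le_div_iff₀ hpos, mul_comm, ← hsum]
  exact Fin.sub_mul_le_sum_of_monotone hr_mono hr i

/-- For `h ≥ 1` Lomax groups with parameters `α₁ ≥ α₂ ≥ ⋯ ≥ α_h > 1` (here 0-indexed by
`Fin h`), if the nonnegative allocation `r` sums to `B` and satisfies
`(1 + r i)^(α i) = (1 + r j)^(α j)` for all `i, j`, then for every `i` (0-indexed),
`r i ≤ B / (h - i)` — i.e. `r_i ≤ B/(h - i + 1)` in 1-indexed notation. -/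
theorem lomax_maxutil_upper (h : ℕ) (hh : 1 ≤ h) (α : Fin h → ℝ)
    (hα1 : ∀ i, 1 < α i)
    (hmono : ∀ i j : Fin h, i ≤ j → α j ≤ α i)
    (r : Fin h → ℝ) (hr : ∀ i, 0 ≤ r i) (B : ℝ) (hsum : ∑ i, r i = B)
    (heq : ∀ i j : Fin h, (1 + r i) ^ (α i) = (1 + r j) ^ (α j)) :
    ∀ i : Fin h, r i ≤ B / ((h : ℝ) - (i : ℕ)) :=
  lomax_maxutil_upper_general h α hα1 hmono r hr B hsum heq
end

section
/- For every k ≥ 1 and P > 1, there exist two groups with demand distributions D₁ (value n₁ with probability p₁, else 0) and D₂ (value n₁² with probability p₁/n₁, else 0) and budget B = n₁ with n₁ > 2kP - 1, such that the ratio of the unconstrained maximum utilization (with budget B) to the utilization of the unique perfectly-fair fractional allocation using budget kB exceeds P. Concretely: p₁n₁ / [(kn₁/(n₁+n₁²))(n₁p₁ + n₁²·(p₁/n₁))] = (1+n₁)/(2k) > P. -/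
/-!
The perfectly fair allocation splits the budget `k n` in proportion `1 : n` between the groups,
so its utilization is `2 k p n / (1 + n)` against the unconstrained `p n`: the price of fairness
is `(1 + n) / (2 k)`, which exceeds `P` exactly when `n > 2 k P - 1`.
-/

lemma fair_utilization_eq {n p k : ℝ} (hn : 0 < n) :
    k * n / (n + n ^ 2) * (n * p + n ^ 2 * (p / n)) = 2 * k * p * n / (1 + n) := by
  field_simp
  ring

lemma price_of_fairness_eq {n p k : ℝ} (hn : 0 < n) (hp : p ≠ 0) (hk : k ≠ 0) :
    p * n / (k * n / (n + n ^ 2) * (n * p + n ^ 2 * (p / n))) = (1 + n) / (2 * k) := by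
  rw [fair_utilization_eq hn]
  field_simp

lemma lt_one_add_div_two_mul_iff {n k P : ℝ} (hk : 0 < k) :
    P < (1 + n) / (2 * k) ↔ 2 * k * P - 1 < n := by
  rw [lt_div_iff₀ (by positivity)]
  constructor <;> intro h <;> linarith

theorem pof_unbounded_eps_zero_general (k P : ℝ) (hk : 1 ≤ k) :
    ∃ n₁ : ℕ, (n₁ : ℝ) > 2 * k * P - 1 ∧
      ∀ p₁ : ℝ, 0 < p₁ → p₁ < 1 →
        p₁ * (n₁ : ℝ) /
          ((k * (n₁ : ℝ) / ((n₁ : ℝ) + (n₁ : ℝ) ^ 2)) *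
            ((n₁ : ℝ) * p₁ + (n₁ : ℝ) ^ 2 * (p₁ / (n₁ : ℝ))))
          = (1 + (n₁ : ℝ)) / (2 * k) ∧
        (1 + (n₁ : ℝ)) / (2 * k) > P := by
  have hk₀ : 0 < k := by linarith
  obtain ⟨n, hn⟩ := exists_nat_gt (max (2 * k * P - 1) 0)
  obtain ⟨hn_large, hn_pos⟩ := max_lt_iff.mp hn
  refine ⟨n, hn_large, fun p₁ hp₁ _ => ⟨price_of_fairness_eq hn_pos hp₁.ne' hk₀.ne', ?_⟩⟩
  exact (lt_one_add_div_two_mul_iff hk₀).mpr hn_large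

/-- For every `k ≥ 1` and `P > 1` there is `n₁ ∈ ℕ` with `n₁ > 2kP - 1` such that for
the two-group instance (group 1: demand `n₁` w.p. `p₁`; group 2: demand `n₁²` w.p.
`p₁/n₁`) with budget `B = n₁`, the ratio of the unconstrained max utilization `p₁ n₁`
to the utilization of the unique perfectly-fair fractional allocation with budget `kB`,
namely `(k n₁/(n₁+n₁²))(n₁ p₁ + n₁²(p₁/n₁))`, equals `(1+n₁)/(2k)` and exceeds `P`. -/
theorem pof_unbounded_eps_zero (k P : ℝ) (hk : 1 ≤ k) (hP : 1 < P) :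
    ∃ n₁ : ℕ, (n₁ : ℝ) > 2 * k * P - 1 ∧
      ∀ p₁ : ℝ, 0 < p₁ → p₁ < 1 →
        p₁ * (n₁ : ℝ) /
          ((k * (n₁ : ℝ) / ((n₁ : ℝ) + (n₁ : ℝ) ^ 2)) *
            ((n₁ : ℝ) * p₁ + (n₁ : ℝ) ^ 2 * (p₁ / (n₁ : ℝ))))
          = (1 + (n₁ : ℝ)) / (2 * k) ∧
        (1 + (n₁ : ℝ)) / (2 * k) > P :=
  pof_unbounded_eps_zero_general k P hk
end

section
/- Given h groups with nonnegative demand distributions D₁,…,D_h having finite positive means, suppose a max-utilization allocation (r₁,…,r_h) summing to B exists, and construct (r₁',…,r_h') by setting r_i' so that q(r_i', D_i) = ε for each i with q(r_i, D_i) > ε, and r_i' = r_i otherwise (where 0 < ε ≤ 1). Then (r') is ε-fair, uses at most B resources, and the ratio Σ_i E[min(X, r_i)] / Σ_i E[min(X, r_i')] is at most 1/ε. -/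
/-!
Every group keeps at least an `ε`-fraction of its utilization: a group that is not cut keeps
all of it (as `ε ≤ 1`), and a cut group keeps `ε μ ≥ ε U(r)`. Summing, the fair utilization is at
least `ε` times the optimal one. Fairness holds because every probability of service ends up in
`[0, ε]`, and the budget because allocations only decrease.
-/

/-- The paper's construction of `r'` from `r` for a single group, `U r / μ` being its
probability of service. -/
def IsFairCut (ε μ : ℝ) (U : ℝ → ℝ) (r r' : ℝ) : Prop :=
  (ε < U r / μ → U r' = ε * μ ∧ r' ≤ r) ∧ (U r / μ ≤ ε → r' = r)

namespace IsFairCut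

variable {ε μ : ℝ} {U : ℝ → ℝ} {r r' : ℝ}

theorem le (hcut : IsFairCut ε μ U r r') : r' ≤ r := by
  rcases le_or_gt (U r / μ) ε with hq | hq
  · exact (hcut.2 hq).le
  · exact (hcut.1 hq).2

theorem div_le (hcut : IsFairCut ε μ U r r') (hμ : 0 < μ) : U r' / μ ≤ ε := by
  rcases le_or_gt (U r / μ) ε with hq | hq
  · rwa [hcut.2 hq]
  · rw [(hcut.1 hq).1, mul_div_cancel_right₀ ε hμ.ne']

theorem mul_le (hcut : IsFairCut ε μ U r r') (hε0 : 0 ≤ ε) (hε1 : ε ≤ 1)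
    (hU0 : 0 ≤ U r) (hUμ : U r ≤ μ) : ε * U r ≤ U r' := by
  rcases le_or_gt (U r / μ) ε with hq | hq
  · rw [hcut.2 hq]
    exact mul_le_of_le_one_left hU0 hε1
  · rw [(hcut.1 hq).1]
    exact mul_le_mul_of_nonneg_left hUμ hε0

end IsFairCut

theorem div_le_one_div_of_mul_le {ε a b : ℝ} (hε : 0 < ε) (hb : 0 ≤ b) (h : ε * a ≤ b) :
    a / b ≤ 1 / ε :=
  div_le_of_le_mul₀ hb (by positivity) (by rwa [one_div_mul_eq_div, le_div_iff₀' hε])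

theorem pof_le_inv_eps_general (h : ℕ) (U : Fin h → ℝ → ℝ) (μ : Fin h → ℝ)
    (r r' : Fin h → ℝ) (B ε : ℝ)
    (hμ : ∀ i, 0 < μ i)
    (hU0 : ∀ i x, 0 ≤ U i x) (hUμ : ∀ i x, U i x ≤ μ i)
    (hε0 : 0 < ε) (hε1 : ε ≤ 1)
    (hB : ∑ i, r i = B)
    (hr' : ∀ i, (ε < U i (r i) / μ i → U i (r' i) = ε * μ i ∧ r' i ≤ r i) ∧
                (U i (r i) / μ i ≤ ε → r' i = r i)) :
    (∀ i j, |U i (r' i) / μ i - U j (r' j) / μ j| ≤ ε) ∧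
    (∑ i, r' i ≤ B) ∧
    (∑ i, U i (r i)) / (∑ i, U i (r' i)) ≤ 1 / ε := by
  have hcut : ∀ i, IsFairCut ε (μ i) (U i) (r i) (r' i) := hr'
  have hq0 : ∀ i, 0 ≤ U i (r' i) / μ i := fun i => div_nonneg (hU0 i _) (hμ i).le
  refine ⟨fun i j => abs_sub_le_of_nonneg_of_le (hq0 i) ((hcut i).div_le (hμ i))
      (hq0 j) ((hcut j).div_le (hμ j)),
    hB ▸ Finset.sum_le_sum fun i _ => (hcut i).le,
    div_le_one_div_of_mul_le hε0 (Finset.sum_nonneg fun i _ => hU0 i _) ?_⟩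
  rw [Finset.mul_sum]
  exact Finset.sum_le_sum fun i _ => (hcut i).mul_le hε0.le hε1 (hU0 i _) (hUμ i _)

/-- Given `h` groups with utilization functions `U i r = E_{X~D_i}[min(X, r)]` and means
`μ i > 0` (so `0 ≤ U i r ≤ μ i` and `U i` is monotone), a max-utilization allocation `r`
summing to `B`, and `0 < ε ≤ 1`: construct `r'` by lowering `r i` so that the
probability of service `q(r' i) = U i (r' i) / μ i` equals `ε` whenever `q(r i) > ε`,
and `r' i = r i` otherwise. Then `r'` is ε-fair, uses at most `B` resources, and the
price-of-fairness ratio is at most `1/ε`. -/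
theorem pof_le_inv_eps (h : ℕ) (U : Fin h → ℝ → ℝ) (μ : Fin h → ℝ)
    (r r' : Fin h → ℝ) (B ε : ℝ)
    (hμ : ∀ i, 0 < μ i)
    (hU0 : ∀ i x, 0 ≤ U i x) (hUμ : ∀ i x, U i x ≤ μ i)
    (hUmono : ∀ i, Monotone (U i))
    (hε0 : 0 < ε) (hε1 : ε ≤ 1)
    (hB : ∑ i, r i = B)
    (hr' : ∀ i, (ε < U i (r i) / μ i → U i (r' i) = ε * μ i ∧ r' i ≤ r i) ∧
                (U i (r i) / μ i ≤ ε → r' i = r i)) :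
    (∀ i j, |U i (r' i) / μ i - U j (r' j) / μ j| ≤ ε) ∧
    (∑ i, r' i ≤ B) ∧
    (∑ i, U i (r i)) / (∑ i, U i (r' i)) ≤ 1 / ε :=
  pof_le_inv_eps_general h U μ r r' B ε hμ hU0 hUμ hε0 hε1 hB hr'
end

section
/- Let D₁,…,D_h be integer-valued demand distributions, and consider fractional allocations (r₁,…,r_h) of nonnegative reals summing to a budget B ∈ ℕ, with utilization of group i given by Σ_{x=0}^{⌊r_i⌋} x f_i(x) + (1 - F_i(⌊r_i⌋))·r_i. Then there exists a utilization-maximizing allocation with all r_i ∈ ℕ. In particular, for any allocation with two non-integer coordinates r_i = n_i + ε_i and r_j = n_j + ε_j (0 < ε_i, ε_j < 1, 1 - F_i(n_i) ≥ 1 - F_j(n_j)), shifting fractional mass from j to i does not decrease total utilization. -/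
/-- Fractional utilization of allocation `r ≥ 0` for an integer-valued demand with pmf
`f` and CDF `F`: `Σ_{x=0}^{⌊r⌋} x f(x) + (1 - F(⌊r⌋)) r`. -/
noncomputable def fracUtil (f : ℕ → ℝ) (F : ℕ → ℝ) (r : ℝ) : ℝ :=
  (∑ x ∈ Finset.range (⌊r⌋₊ + 1), (x : ℝ) * f x) + (1 - F ⌊r⌋₊) * r

lemma util_add (f F : ℕ → ℝ) (hF : ∀ m, F m = ∑ x ∈ Finset.range (m + 1), f x)
    (n : ℕ) (ε : ℝ) (h0 : 0 ≤ ε) (h1 : ε ≤ 1) :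
    fracUtil f F ((n : ℝ) + ε) = fracUtil f F (n : ℝ) + (1 - F n) * ε := by
  rcases eq_or_lt_of_le h1 with h1 | h1
  · subst h1
    have hcast : (n : ℝ) + 1 = ((n + 1 : ℕ) : ℝ) := by push_cast; ring
    rw [hcast]
    unfold fracUtil
    rw [Nat.floor_natCast, Nat.floor_natCast,
      Finset.sum_range_succ (fun x => (x : ℝ) * f x) (n + 1), hF (n + 1),
      Finset.sum_range_succ f (n + 1), ← hF n]
    push_cast
    ring
  · have hfl : ⌊(n : ℝ) + ε⌋₊ = n := by
      rw [Nat.floor_eq_iff (by positivity)]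
      constructor
      · linarith
      · push_cast; linarith
    unfold fracUtil
    rw [hfl, Nat.floor_natCast]
    ring

lemma sum_comp_update {ι : Type*} [Fintype ι] [DecidableEq ι]
    (g : ι → ℝ → ℝ) (t : ι → ℝ) (j : ι) (b : ℝ) :
    ∑ x, g x (Function.update t j b x) = (∑ x, g x (t x)) - g j (t j) + g j b := by
  have key : (∑ x ∈ Finset.univ.erase j, g x (Function.update t j b x)) =
      ∑ x ∈ Finset.univ.erase j, g x (t x) :=
    Finset.sum_congr rfl (fun x hx => by
      rw [Function.update_of_ne (Finset.ne_of_mem_erase hx)])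
  rw [← Finset.add_sum_erase _ (fun x => g x (Function.update t j b x)) (Finset.mem_univ j),
      ← Finset.add_sum_erase _ (fun x => g x (t x)) (Finset.mem_univ j), key,
      Function.update_self]
  ring

lemma two_update_sum {h : ℕ} (f F : Fin h → ℕ → ℝ) (s : Fin h → ℝ) (i j : Fin h)
    (hij : i ≠ j) (a b : ℝ) :
    ∑ x, fracUtil (f x) (F x) (Function.update (Function.update s i a) j b x) =
      (∑ x, fracUtil (f x) (F x) (s x)) - fracUtil (f i) (F i) (s i)
        - fracUtil (f j) (F j) (s j) + fracUtil (f i) (F i) a + fracUtil (f j) (F j) b := by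
  rw [sum_comp_update (fun x => fracUtil (f x) (F x)) _ j b,
      sum_comp_update (fun x => fracUtil (f x) (F x)) s i a,
      Function.update_of_ne hij.symm]
  ring

lemma shift_lemma {h : ℕ} (f F : Fin h → ℕ → ℝ)
    (hF : ∀ i m, F i m = ∑ x ∈ Finset.range (m + 1), f i x)
    (s : Fin h → ℝ) (i j : Fin h) (hij : i ≠ j) (ni nj : ℕ) (εi εj : ℝ)
    (hsi : s i = (ni : ℝ) + εi) (hsj : s j = (nj : ℝ) + εj)
    (h0i : 0 < εi) (h1i : εi < 1) (h0j : 0 < εj) (h1j : εj < 1)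
    (hc : 1 - F j nj ≤ 1 - F i ni) :
    ((εi + εj ≤ 1 →
        ∑ x, fracUtil (f x) (F x) (s x) ≤
        ∑ x, fracUtil (f x) (F x)
          (Function.update (Function.update s i ((ni : ℝ) + εi + εj)) j (nj : ℝ) x)) ∧
     (1 < εi + εj →
        ∑ x, fracUtil (f x) (F x) (s x) ≤
        ∑ x, fracUtil (f x) (F x)
          (Function.update (Function.update s i ((ni : ℝ) + 1)) j
            ((nj : ℝ) + εi + εj - 1) x))) := by
  have hui : fracUtil (f i) (F i) (s i) =
      fracUtil (f i) (F i) (ni : ℝ) + (1 - F i ni) * εi := by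
    rw [hsi]; exact util_add _ _ (hF i) ni εi h0i.le h1i.le
  have huj : fracUtil (f j) (F j) (s j) =
      fracUtil (f j) (F j) (nj : ℝ) + (1 - F j nj) * εj := by
    rw [hsj]; exact util_add _ _ (hF j) nj εj h0j.le h1j.le
  constructor
  · intro hle
    rw [two_update_sum f F s i j hij]
    have ha : ((ni : ℝ) + εi + εj) = (ni : ℝ) + (εi + εj) := by ring
    have hui' : fracUtil (f i) (F i) ((ni : ℝ) + εi + εj) =
        fracUtil (f i) (F i) (ni : ℝ) + (1 - F i ni) * (εi + εj) := by
      rw [ha]; exact util_add _ _ (hF i) ni (εi + εj) (by linarith) hle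
    rw [hui, huj, hui']
    nlinarith [mul_le_mul_of_nonneg_right hc h0j.le]
  · intro hgt
    rw [two_update_sum f F s i j hij]
    have hui' : fracUtil (f i) (F i) ((ni : ℝ) + 1) =
        fracUtil (f i) (F i) (ni : ℝ) + (1 - F i ni) * 1 :=
      util_add _ _ (hF i) ni 1 zero_le_one le_rfl
    have hb : ((nj : ℝ) + εi + εj - 1) = (nj : ℝ) + (εi + εj - 1) := by ring
    have huj' : fracUtil (f j) (F j) ((nj : ℝ) + εi + εj - 1) =
        fracUtil (f j) (F j) (nj : ℝ) + (1 - F j nj) * (εi + εj - 1) := by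
      rw [hb]; exact util_add _ _ (hF j) nj (εi + εj - 1) (by linarith) (by linarith)
    rw [hui, huj, hui', huj']
    nlinarith [mul_le_mul_of_nonneg_right hc (by linarith : (0:ℝ) ≤ 1 - εi)]

lemma step_lemma {h : ℕ} (f F : Fin h → ℕ → ℝ)
    (hF : ∀ i m, F i m = ∑ x ∈ Finset.range (m + 1), f i x) (B k : ℕ)
    (ih : ∀ s : Fin h → ℝ,
      (Finset.univ.filter (fun i => s i ≠ (⌊s i⌋₊ : ℝ))).card ≤ k →
      (∀ i, 0 ≤ s i) → (∑ i, s i) = (B : ℝ) →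
      ∃ r : Fin h → ℕ, (∑ i, r i) = B ∧
        ∑ i, fracUtil (f i) (F i) (s i) ≤ ∑ i, fracUtil (f i) (F i) ((r i : ℝ)))
    (s : Fin h → ℝ) (hs0 : ∀ i, 0 ≤ s i) (hsum : (∑ i, s i) = (B : ℝ))
    (i j : Fin h) (hij : i ≠ j)
    (hiT : s i ≠ (⌊s i⌋₊ : ℝ)) (hjT : s j ≠ (⌊s j⌋₊ : ℝ))
    (hc : 1 - F j ⌊s j⌋₊ ≤ 1 - F i ⌊s i⌋₊)
    (hcard : (Finset.univ.filter (fun x => s x ≠ (⌊s x⌋₊ : ℝ))).card ≤ k + 1) :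
    ∃ r : Fin h → ℕ, (∑ i, r i) = B ∧
      ∑ i, fracUtil (f i) (F i) (s i) ≤ ∑ i, fracUtil (f i) (F i) ((r i : ℝ)) := by
  set ni := ⌊s i⌋₊ with hni
  set nj := ⌊s j⌋₊ with hnj
  set εi := s i - (ni : ℝ) with hεi
  set εj := s j - (nj : ℝ) with hεj
  have hsi : s i = (ni : ℝ) + εi := by ring
  have hsj : s j = (nj : ℝ) + εj := by ring
  have h0i : 0 < εi := by
    have := Nat.floor_le (hs0 i)
    rcases lt_or_eq_of_le this with h' | h'
    · simpa [hεi] using h'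
    · exact absurd h'.symm hiT
  have h0j : 0 < εj := by
    have := Nat.floor_le (hs0 j)
    rcases lt_or_eq_of_le this with h' | h'
    · simpa [hεj] using h'
    · exact absurd h'.symm hjT
  have h1i : εi < 1 := by
    have := Nat.lt_floor_add_one (s i); simp only [hεi]; linarith
  have h1j : εj < 1 := by
    have := Nat.lt_floor_add_one (s j); simp only [hεj]; linarith
  have hshift := shift_lemma f F hF s i j hij ni nj εi εj hsi hsj h0i h1i h0j h1j hc
  set T := Finset.univ.filter (fun x => s x ≠ (⌊s x⌋₊ : ℝ)) with hT
  have hiT' : i ∈ T := by simp [hT]; exact hiT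
  have hjT' : j ∈ T := by simp [hT]; exact hjT
  rcases le_or_gt (εi + εj) 1 with hle | hgt
  · -- case 1
    set s' := Function.update (Function.update s i ((ni : ℝ) + εi + εj)) j (nj : ℝ) with hs'
    have hs'j : s' j = (nj : ℝ) := by simp [hs']
    have hs'i : s' i = (ni : ℝ) + εi + εj := by
      simp [hs', Function.update_of_ne hij, Function.update_self]
    have hs'x : ∀ x, x ≠ i → x ≠ j → s' x = s x := fun x hxi hxj => by
      simp [hs', Function.update_of_ne hxj, Function.update_of_ne hxi]
    have hsub : (Finset.univ.filter (fun x => s' x ≠ (⌊s' x⌋₊ : ℝ))) ⊆ T.erase j := by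
      intro x hx
      simp only [Finset.mem_filter, Finset.mem_univ, true_and] at hx
      have hxj : x ≠ j := by
        intro hxj; subst hxj
        exact hx (by rw [hs'j, Nat.floor_natCast])
      rcases eq_or_ne x i with hxi | hxi
      · subst hxi; exact Finset.mem_erase.2 ⟨hxj, hiT'⟩
      · refine Finset.mem_erase.2 ⟨hxj, ?_⟩
        simp only [hT, Finset.mem_filter, Finset.mem_univ, true_and]
        rw [← hs'x x hxi hxj]; exact hx
    have hcard' : (Finset.univ.filter (fun x => s' x ≠ (⌊s' x⌋₊ : ℝ))).card ≤ k := by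
      have h1 := Finset.card_le_card hsub
      have h2 := Finset.card_erase_of_mem hjT'
      omega
    have hs0' : ∀ x, 0 ≤ s' x := by
      intro x
      rcases eq_or_ne x j with rfl | hxj
      · rw [hs'j]; positivity
      rcases eq_or_ne x i with rfl | hxi
      · rw [hs'i]; have : (0:ℝ) ≤ (ni : ℝ) := by positivity
        linarith
      · rw [hs'x x hxi hxj]; exact hs0 x
    have hsum' : (∑ x, s' x) = (B : ℝ) := by
      have := sum_comp_update (fun _ t => t) (Function.update s i ((ni : ℝ) + εi + εj)) j (nj : ℝ)
      have h2 := sum_comp_update (fun _ t => t) s i ((ni : ℝ) + εi + εj)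
      rw [hs', this, h2, Function.update_of_ne hij.symm, hsi, hsj, ← hsum]
      ring
    obtain ⟨r, hrB, hr⟩ := ih s' hcard' hs0' hsum'
    exact ⟨r, hrB, le_trans (hshift.1 hle) hr⟩
  · -- case 2
    set s' := Function.update (Function.update s i ((ni : ℝ) + 1)) j
        ((nj : ℝ) + εi + εj - 1) with hs'
    have hs'j : s' j = (nj : ℝ) + εi + εj - 1 := by simp [hs']
    have hs'i : s' i = (ni : ℝ) + 1 := by
      simp [hs', Function.update_of_ne hij, Function.update_self]
    have hs'x : ∀ x, x ≠ i → x ≠ j → s' x = s x := fun x hxi hxj => by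
      simp [hs', Function.update_of_ne hxj, Function.update_of_ne hxi]
    have hsub : (Finset.univ.filter (fun x => s' x ≠ (⌊s' x⌋₊ : ℝ))) ⊆ T.erase i := by
      intro x hx
      simp only [Finset.mem_filter, Finset.mem_univ, true_and] at hx
      have hxi : x ≠ i := by
        intro hxi; subst hxi
        apply hx
        have : s' x = ((ni + 1 : ℕ) : ℝ) := by rw [hs'i]; push_cast; ring
        rw [this, Nat.floor_natCast]
      rcases eq_or_ne x j with hxj | hxj
      · subst hxj; exact Finset.mem_erase.2 ⟨hxi, hjT'⟩
      · refine Finset.mem_erase.2 ⟨hxi, ?_⟩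
        simp only [hT, Finset.mem_filter, Finset.mem_univ, true_and]
        rw [← hs'x x hxi hxj]; exact hx
    have hcard' : (Finset.univ.filter (fun x => s' x ≠ (⌊s' x⌋₊ : ℝ))).card ≤ k := by
      have h1 := Finset.card_le_card hsub
      have h2 := Finset.card_erase_of_mem hiT'
      omega
    have hs0' : ∀ x, 0 ≤ s' x := by
      intro x
      rcases eq_or_ne x j with rfl | hxj
      · rw [hs'j]; have : (0:ℝ) ≤ (nj : ℝ) := by positivity
        linarith
      rcases eq_or_ne x i with rfl | hxi
      · rw [hs'i]; positivity
      · rw [hs'x x hxi hxj]; exact hs0 x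
    have hsum' : (∑ x, s' x) = (B : ℝ) := by
      have := sum_comp_update (fun _ t => t) (Function.update s i ((ni : ℝ) + 1)) j
        ((nj : ℝ) + εi + εj - 1)
      have h2 := sum_comp_update (fun _ t => t) s i ((ni : ℝ) + 1)
      rw [hs', this, h2, Function.update_of_ne hij.symm, hsi, hsj, ← hsum]
      ring
    obtain ⟨r, hrB, hr⟩ := ih s' hcard' hs0' hsum'
    exact ⟨r, hrB, le_trans (hshift.2 hgt) hr⟩

lemma dominate {h : ℕ} (f F : Fin h → ℕ → ℝ)
    (hF : ∀ i m, F i m = ∑ x ∈ Finset.range (m + 1), f i x) (B : ℕ) :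
    ∀ (k : ℕ) (s : Fin h → ℝ),
      (Finset.univ.filter (fun i => s i ≠ (⌊s i⌋₊ : ℝ))).card ≤ k →
      (∀ i, 0 ≤ s i) → (∑ i, s i) = (B : ℝ) →
      ∃ r : Fin h → ℕ, (∑ i, r i) = B ∧
        ∑ i, fracUtil (f i) (F i) (s i) ≤ ∑ i, fracUtil (f i) (F i) ((r i : ℝ)) := by
  intro k
  induction k with
  | zero =>
    intro s hcard hs0 hsum
    have hall : ∀ i, s i = (⌊s i⌋₊ : ℝ) := by
      intro i
      by_contra hne
      have : i ∈ Finset.univ.filter (fun i => s i ≠ (⌊s i⌋₊ : ℝ)) := by simp [hne]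
      have := Finset.card_pos.2 ⟨i, this⟩
      omega
    refine ⟨fun i => ⌊s i⌋₊, ?_, ?_⟩
    · have : ((∑ i, ⌊s i⌋₊ : ℕ) : ℝ) = (B : ℝ) := by
        push_cast
        rw [← hsum]
        exact Finset.sum_congr rfl (fun i _ => (hall i).symm)
      exact_mod_cast this
    · exact le_of_eq (Finset.sum_congr rfl (fun i _ => by rw [hall i]))
  | succ k ih =>
    intro s hcard hs0 hsum
    set T := Finset.univ.filter (fun i => s i ≠ (⌊s i⌋₊ : ℝ)) with hT
    rcases T.eq_empty_or_nonempty with hTe | ⟨i0, hi0⟩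
    · exact ih s (by rw [← hT, hTe]; simp) hs0 hsum
    · have hi0' : s i0 ≠ (⌊s i0⌋₊ : ℝ) := by
        simpa [hT] using hi0
      -- find a second fractional index
      have hexj : ∃ j0 ∈ T, j0 ≠ i0 := by
        by_contra hcon
        push_neg at hcon
        have hTsub : T ⊆ {i0} := fun x hx => Finset.mem_singleton.2 (hcon x hx)
        have hTeq : T = {i0} := Finset.Subset.antisymm hTsub (Finset.singleton_subset_iff.2 hi0)
        -- sum of fractional parts
        set ε : Fin h → ℝ := fun i => s i - (⌊s i⌋₊ : ℝ) with hε
        have hε0 : ∀ i, 0 ≤ ε i := fun i => by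
          simp only [hε, sub_nonneg]; exact Nat.floor_le (hs0 i)
        have hεT : ∀ x : Fin h, ε x ≠ 0 → s x ≠ (⌊s x⌋₊ : ℝ) := by
          intro x hx hcontra
          apply hx
          simp only [hε]
          exact sub_eq_zero.mpr hcontra
        have hsumε : (∑ x ∈ T, ε x) = ∑ x, ε x := by
          rw [hT]
          exact Finset.sum_filter_of_ne (fun x _ hx => hεT x hx)
        have hεi0lt : ε i0 < 1 := by
          have := Nat.lt_floor_add_one (s i0); simp only [hε]; linarith
        have hεi0pos : 0 < ε i0 := by
          have h' := Nat.floor_le (hs0 i0)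
          rcases lt_or_eq_of_le h' with h' | h'
          · simp only [hε]; linarith
          · exact absurd h'.symm hi0'
        have hsum1 : (∑ x, ε x) = ε i0 := by rw [← hsumε, hTeq, Finset.sum_singleton]
        have hsum2 : (∑ x, ε x) = (B : ℝ) - ((∑ x, ⌊s x⌋₊ : ℕ) : ℝ) := by
          push_cast
          rw [← hsum, ← Finset.sum_sub_distrib]
        have hBN : (B : ℝ) - ((∑ x, ⌊s x⌋₊ : ℕ) : ℝ) = ε i0 := by rw [← hsum2, hsum1]
        have hlt1 : ((∑ x, ⌊s x⌋₊ : ℕ) : ℝ) < (B : ℝ) := by linarith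
        have hlt2 : (B : ℝ) < ((∑ x, ⌊s x⌋₊ : ℕ) : ℝ) + 1 := by linarith
        have hlt1' : (∑ x, ⌊s x⌋₊) < B := by exact_mod_cast hlt1
        have hlt2' : B < (∑ x, ⌊s x⌋₊) + 1 := by exact_mod_cast hlt2
        omega
      obtain ⟨j0, hj0, hj0i0⟩ := hexj
      have hj0' : s j0 ≠ (⌊s j0⌋₊ : ℝ) := by simpa [hT] using hj0
      rcases le_total (1 - F j0 ⌊s j0⌋₊) (1 - F i0 ⌊s i0⌋₊) with hc | hc
      · exact step_lemma f F hF B k ih s hs0 hsum i0 j0 hj0i0.symm hi0' hj0' hc hcard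
      · exact step_lemma f F hF B k ih s hs0 hsum j0 i0 hj0i0 hj0' hi0' hc hcard

/-- For integer-valued demand distributions, among fractional allocations summing to a
budget `B ∈ ℕ` there is a utilization-maximizing allocation with all coordinates in `ℕ`.
In particular, for any allocation with two non-integer coordinates
`s i = n_i + ε_i`, `s j = n_j + ε_j` (`0 < ε_i, ε_j < 1`) with
`1 - F_j(n_j) ≤ 1 - F_i(n_i)`, shifting fractional mass from `j` to `i` (per the two
cases `ε_i + ε_j ≤ 1` and `ε_i + ε_j > 1`) does not decrease total utilization. -/
theorem integer_allocation_optimal (h : ℕ) (hh : 0 < h)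
    (f : Fin h → ℕ → ℝ) (F : Fin h → ℕ → ℝ)
    (hf : ∀ i x, 0 ≤ f i x)
    (hF : ∀ i m, F i m = ∑ x ∈ Finset.range (m + 1), f i x)
    (hF1 : ∀ i m, F i m ≤ 1) (B : ℕ) :
    (∃ r : Fin h → ℕ, (∑ i, r i) = B ∧
      ∀ s : Fin h → ℝ, (∀ i, 0 ≤ s i) → (∑ i, s i) = (B : ℝ) →
        ∑ i, fracUtil (f i) (F i) (s i) ≤ ∑ i, fracUtil (f i) (F i) ((r i : ℝ))) ∧
    (∀ s : Fin h → ℝ, (∀ i, 0 ≤ s i) → ∀ i j : Fin h, i ≠ j →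
      ∀ (ni nj : ℕ) (εi εj : ℝ),
        s i = (ni : ℝ) + εi → s j = (nj : ℝ) + εj →
        0 < εi → εi < 1 → 0 < εj → εj < 1 →
        1 - F j nj ≤ 1 - F i ni →
        ((εi + εj ≤ 1 →
            ∑ x, fracUtil (f x) (F x) (s x) ≤
            ∑ x, fracUtil (f x) (F x)
              (Function.update (Function.update s i ((ni : ℝ) + εi + εj)) j (nj : ℝ) x)) ∧
         (1 < εi + εj →
            ∑ x, fracUtil (f x) (F x) (s x) ≤
            ∑ x, fracUtil (f x) (F x)
              (Function.update (Function.update s i ((ni : ℝ) + 1)) j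
                ((nj : ℝ) + εi + εj - 1) x)))) := by
  constructor
  · -- existence of integer maximizer
    set A : Set (Fin h → ℕ) := {r | (∑ i, r i) = B} with hA
    have hAfin : A.Finite := by
      apply Set.Finite.subset (Set.Finite.pi (fun i : Fin h => Set.finite_Iic B))
      intro r hr
      have hrB : (∑ x, r x) = B := hr
      simp only [Set.mem_pi, Set.mem_univ, Set.mem_Iic, forall_true_left]
      intro i
      have : r i ≤ ∑ x, r x := Finset.single_le_sum (fun x _ => Nat.zero_le _) (Finset.mem_univ i)
      rw [hrB] at this
      exact this
    have hAne : A.Nonempty := by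
      refine ⟨fun i => if i = ⟨0, hh⟩ then B else 0, ?_⟩
      simp [hA, Finset.sum_ite_eq']
    obtain ⟨r, hrA, hrmax⟩ := Set.exists_max_image A
      (fun r => ∑ i, fracUtil (f i) (F i) ((r i : ℝ))) hAfin hAne
    refine ⟨r, hrA, ?_⟩
    intro s hs0 hsum
    obtain ⟨r', hr'B, hr'⟩ := dominate f F hF B
      ((Finset.univ.filter (fun i => s i ≠ (⌊s i⌋₊ : ℝ))).card) s le_rfl hs0 hsum
    exact le_trans hr' (hrmax r' hr'B)
  · intro s hs0 i j hij ni nj εi εj hsi hsj h0i h1i h0j h1j hc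
    exact shift_lemma f F hF s i j hij ni nj εi εj hsi hsj h0i h1i h0j h1j hc
end
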